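/- arXiv:2505.22196 — 2 statements merged into one kernel-verified Lean document; each statement's English description precedes it below -/
import Mathlib

section
/- (CURL bound) For any encoder f : 𝒳 → ℝ^d with all relevant integrals existing, the intermediate supervised risk satisfies R̄^sup(f) ≥ (1 − τ_K) · R^sup(f) + E_{(c,c_1,…,c_K)~π^{K+1}} log(Col(c,{c_k}) + 1). (Note that E log(Col + 1) = τ_K · E[ log(Col + 1) | Col ≠ 0 ] since log(Col + 1) = 0 on the event Col = 0.) -/
open MeasureTheory Real
open scoped BigOperators RealInnerProductSpace

noncomputable section

variable {X : Type*} [MeasurableSpace X] {Ω : Type*} [MeasurableSpace Ω] {d C : ℕ}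

/-- The InfoNCE loss in logistic form:
`L^un(x, x', {x_k}; f) = log(1 + Σ_k exp(−f(x)ᵀ[f(x') − f(x_k)]))`. -/
def infoNCE (f : X → EuclideanSpace ℝ (Fin d)) (K : ℕ) (x x' : X) (xs : Fin K → X) : ℝ :=
  Real.log (1 + ∑ k, Real.exp (-⟪f x, f x' - f (xs k)⟫))

/-- The probability of drawing the class tuple `(c, c_1, …, c_K)` from `π^{K+1}`. -/
def clsWeight (pr : Fin C → ℝ) {K : ℕ} (c : Fin C) (cs : Fin K → Fin C) : ℝ :=
  pr c * ∏ k, pr (cs k)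

/-- The unsupervised contrastive risk `R^un(f)`. -/
def Run (pr : Fin C → ℝ) (ρ : Fin C → Measure X) (PA : Measure Ω) (A : Ω → X → X)
    (f : X → EuclideanSpace ℝ (Fin d)) (K : ℕ) : ℝ :=
  ∑ c, ∑ cs : Fin K → Fin C, clsWeight pr c cs *
    ∫ xb, ∫ xs, ∫ a, ∫ a', ∫ as,
        infoNCE f K (A a xb) (A a' xb) (fun k => A (as k) (xs k))
      ∂(Measure.pi fun _ : Fin K => PA) ∂PA ∂PA
      ∂(Measure.pi fun k => ρ (cs k)) ∂(ρ c)

/-- The mean-classifier weight `μ_c = E_{x̄~ρ_c} f(x̄)`. -/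
def meanRep (ρ : Fin C → Measure X) (f : X → EuclideanSpace ℝ (Fin d)) (c : Fin C) :
    EuclideanSpace ℝ (Fin d) :=
  ∫ xb, f xb ∂(ρ c)

/-- The collision number `Col(c, {c_k}) = Σ_k 1[c_k = c]`. -/
def colNum {K : ℕ} (c : Fin C) (cs : Fin K → Fin C) : ℕ :=
  ∑ k, if cs k = c then 1 else 0

/-- The class-collision probability `τ_K = P(Col ≠ 0)`. -/
def tauK (pr : Fin C → ℝ) (K : ℕ) : ℝ :=
  ∑ c, ∑ cs : Fin K → Fin C, if colNum c cs ≠ 0 then clsWeight pr c cs else 0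

/-- The expected logistic loss of the mean classifier on the task `(c, c_1, …, c_K)`. -/
def supLoss (ρ : Fin C → Measure X) (f : X → EuclideanSpace ℝ (Fin d)) {K : ℕ}
    (c : Fin C) (cs : Fin K → Fin C) : ℝ :=
  ∫ xb, Real.log (1 + ∑ k, Real.exp (-⟪f xb, meanRep ρ f c - meanRep ρ f (cs k)⟫)) ∂(ρ c)

/-- The supervised risk of the mean classifier, conditioned on no class collision. -/
def Rsup (pr : Fin C → ℝ) (ρ : Fin C → Measure X) (f : X → EuclideanSpace ℝ (Fin d))
    (K : ℕ) : ℝ :=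
  (∑ c, ∑ cs : Fin K → Fin C,
    if colNum c cs = 0 then clsWeight pr c cs * supLoss ρ f c cs else 0) / (1 - tauK pr K)

/-- `E_{(c,c_1,…,c_K)~π^{K+1}} log(Col + 1)`. -/
def expLogCol (pr : Fin C → ℝ) (K : ℕ) : ℝ :=
  ∑ c, ∑ cs : Fin K → Fin C, clsWeight pr c cs * Real.log (colNum c cs + 1)

/-- `D_min(f)`: expected minimum distance between augmentations of two i.i.d. same-class
images, `E_c E_{x̄,x̄'~ρ_c} E_a inf_{a'} ‖f(a(x̄)) − f(a'(x̄'))‖`. -/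
def Dmin (pr : Fin C → ℝ) (ρ : Fin C → Measure X) (PA : Measure Ω) (A : Ω → X → X)
    (f : X → EuclideanSpace ℝ (Fin d)) : ℝ :=
  ∑ c, pr c *
    ∫ xb, ∫ xb', ∫ a, (⨅ a' : Ω, ‖f (A a xb) - f (A a' xb')‖) ∂PA ∂(ρ c) ∂(ρ c)

/-- `D_max(f)`: expected maximum distance between two augmentations of the same image,
`E_c E_{x̄'~ρ_c} sup_{a,a'} ‖f(a(x̄')) − f(a'(x̄'))‖`. -/
def Dmax (pr : Fin C → ℝ) (ρ : Fin C → Measure X) (A : Ω → X → X)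
    (f : X → EuclideanSpace ℝ (Fin d)) : ℝ :=
  ∑ c, pr c * ∫ xb', (⨆ p : Ω × Ω, ‖f (A p.1 xb') - f (A p.2 xb')‖) ∂(ρ c)

/-- The intermediate supervised risk `R̄^sup(f)`. -/
def Rbarsup (pr : Fin C → ℝ) (ρ : Fin C → Measure X) (f : X → EuclideanSpace ℝ (Fin d))
    (K : ℕ) : ℝ :=
  ∑ c, ∑ cs : Fin K → Fin C, clsWeight pr c cs * supLoss ρ f c cs

/-- The inner risk `r_k(i_1,…,i_k)` for fixed anchor class `c`, anchor image `xb` and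
anchor augmentation `a`: the first `k` negatives are drawn from classes `i_1,…,i_k` and
the remaining `K − k` negatives from class `c`. -/
def innerRisk (ρ : Fin C → Measure X) (PA : Measure Ω) (A : Ω → X → X)
    (f : X → EuclideanSpace ℝ (Fin d)) (K : ℕ) (c : Fin C) (xb : X) (a : Ω)
    (k : ℕ) (i : Fin k → Fin C) : ℝ :=
  ∫ xs, ∫ a', ∫ as, infoNCE f K (A a xb) (A a' xb) (fun j => A (as j) (xs j))
    ∂(Measure.pi fun _ : Fin K => PA) ∂PA
    ∂(Measure.pi fun j : Fin K => ρ (if h : (j : ℕ) < k then i ⟨j, h⟩ else c))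

/-- The weight `p_k(i_1,…,i_k) = binom(K,k)·π_{i_1}⋯π_{i_k}·π_c^{K−k}`. -/
def pWeight (pr : Fin C → ℝ) (K : ℕ) (c : Fin C) (k : ℕ) (i : Fin k → Fin C) : ℝ :=
  (Nat.choose K k : ℝ) * (∏ m, pr (i m)) * pr c ^ (K - k)

/-- `r_k^sup(i_1,…,i_k) = log(1 + (K−k) + Σ_{m=1}^k exp(−uᵀ(μ_c − μ_{i_m})))`, where
`u` is the representation of the anchor. -/
def rkSup (ρ : Fin C → Measure X) (f : X → EuclideanSpace ℝ (Fin d)) (K : ℕ)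
    (c : Fin C) (u : EuclideanSpace ℝ (Fin d)) (k : ℕ) (i : Fin k → Fin C) : ℝ :=
  Real.log (1 + ((K - k : ℕ) : ℝ) +
    ∑ m, Real.exp (-⟪u, meanRep ρ f c - meanRep ρ f (i m)⟫))

/-! Each negative whose class collides with the anchor class `c` contributes
`exp (-⟪u, μ_c - μ_c⟫) = 1` to the sum inside the logistic loss, so pointwise that loss is at
least `log (Col + 1)`. Splitting `R̄^sup` into collision-free tasks, which give
`(1 - τ_K) R^sup`, and tasks with a collision, which are bounded below by `log (Col + 1)`
(a term vanishing when `Col = 0`), yields the bound. -/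

theorem Continuous.integrable_comp_of_norm_le {α E F : Type*} [MeasurableSpace α]
    [NormedAddCommGroup E] [ProperSpace E] [NormedAddCommGroup F]
    {μ : Measure α} [IsFiniteMeasure μ] {g : E → F} (hg : Continuous g) {f : α → E}
    (hf : AEStronglyMeasurable f μ) {M : ℝ} (hM : ∀ x, ‖f x‖ ≤ M) :
    Integrable (g ∘ f) μ := by
  obtain ⟨B, hB⟩ :=
    (isCompact_closedBall (0 : E) M).exists_bound_of_continuousOn hg.continuousOn
  exact Integrable.of_bound (hg.comp_aestronglyMeasurable hf) B
    (.of_forall fun x => hB _ (by simpa using hM x))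

theorem colNum_le_sum_exp_neg_inner {E : Type*} [NormedAddCommGroup E] [InnerProductSpace ℝ E]
    {K : ℕ} (μ : Fin C → E) (u : E) (c : Fin C) (cs : Fin K → Fin C) :
    (colNum c cs : ℝ) ≤ ∑ k, Real.exp (-⟪u, μ c - μ (cs k)⟫) := by
  rw [colNum]
  push_cast
  refine Finset.sum_le_sum fun k _ => ?_
  split_ifs with h
  · simp [h]
  · positivity

theorem log_colNum_add_one_le_supLoss (ρ : Fin C → Measure X) [∀ c, IsProbabilityMeasure (ρ c)]
    {f : X → EuclideanSpace ℝ (Fin d)} (hfm : Measurable f) (hfb : ∃ M : ℝ, ∀ x : X, ‖f x‖ ≤ M)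
    {K : ℕ} (c : Fin C) (cs : Fin K → Fin C) :
    Real.log (colNum c cs + 1) ≤ supLoss ρ f c cs := by
  obtain ⟨M, hM⟩ := hfb
  have hloss_cont : Continuous fun u : EuclideanSpace ℝ (Fin d) =>
      Real.log (1 + ∑ k, Real.exp (-⟪u, meanRep ρ f c - meanRep ρ f (cs k)⟫)) :=
    Continuous.log (by fun_prop) fun u => by positivity
  calc Real.log (colNum c cs + 1) = ∫ _, Real.log (colNum c cs + 1) ∂(ρ c) := by simp
    _ ≤ supLoss ρ f c cs :=
      integral_mono (integrable_const _)
        (hloss_cont.integrable_comp_of_norm_le hfm.aestronglyMeasurable hM) fun xb =>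
        Real.log_le_log (by positivity)
          (by linarith [colNum_le_sum_exp_neg_inner (meanRep ρ f) (f xb) c cs])

theorem clsWeight_nonneg {pr : Fin C → ℝ} (hpr : ∀ c, 0 ≤ pr c) {K : ℕ} (c : Fin C)
    (cs : Fin K → Fin C) : 0 ≤ clsWeight pr c cs :=
  mul_nonneg (hpr c) (Finset.prod_nonneg fun k _ => hpr (cs k))

theorem supLoss_nonneg (ρ : Fin C → Measure X) (f : X → EuclideanSpace ℝ (Fin d)) {K : ℕ}
    (c : Fin C) (cs : Fin K → Fin C) : 0 ≤ supLoss ρ f c cs :=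
  integral_nonneg fun _ => Real.log_nonneg (le_add_of_nonneg_right (by positivity))

theorem one_sub_tauK_mul_Rsup_le {pr : Fin C → ℝ} (hpr : ∀ c, 0 ≤ pr c)
    (ρ : Fin C → Measure X) (f : X → EuclideanSpace ℝ (Fin d)) (K : ℕ) :
    (1 - tauK pr K) * Rsup pr ρ f K ≤ ∑ c, ∑ cs : Fin K → Fin C,
      if colNum c cs = 0 then clsWeight pr c cs * supLoss ρ f c cs else 0 := by
  rw [Rsup]
  rcases eq_or_ne (1 - tauK pr K) 0 with h | h
  · rw [h, zero_mul]
    refine Finset.sum_nonneg fun c _ => Finset.sum_nonneg fun cs _ => ?_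
    split_ifs
    · exact mul_nonneg (clsWeight_nonneg hpr c cs) (supLoss_nonneg ρ f c cs)
    · rfl
  · rw [mul_div_cancel₀ _ h]

theorem sum_noCollision_add_expLogCol_le_Rbarsup {pr : Fin C → ℝ} (hpr : ∀ c, 0 ≤ pr c)
    {ρ : Fin C → Measure X} {f : X → EuclideanSpace ℝ (Fin d)} {K : ℕ}
    (hlog : ∀ c (cs : Fin K → Fin C), Real.log (colNum c cs + 1) ≤ supLoss ρ f c cs) :
    (∑ c, ∑ cs : Fin K → Fin C,
      if colNum c cs = 0 then clsWeight pr c cs * supLoss ρ f c cs else 0) + expLogCol pr K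
      ≤ Rbarsup pr ρ f K := by
  rw [expLogCol, Rbarsup, ← Finset.sum_add_distrib]
  refine Finset.sum_le_sum fun c _ => ?_
  rw [← Finset.sum_add_distrib]
  refine Finset.sum_le_sum fun cs _ => ?_
  split_ifs with h
  · simp [h]
  · rw [zero_add]
    exact mul_le_mul_of_nonneg_left (hlog c cs) (clsWeight_nonneg hpr c cs)

theorem curl_bound_general
    (K : ℕ)
    (pr : Fin C → ℝ) (hpr : ∀ c, 0 ≤ pr c)
    (ρ : Fin C → Measure X) [∀ c, IsProbabilityMeasure (ρ c)]
    (f : X → EuclideanSpace ℝ (Fin d)) (hfm : Measurable f)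
    (hfb : ∃ M : ℝ, ∀ x : X, ‖f x‖ ≤ M) :
    Rbarsup pr ρ f K ≥ (1 - tauK pr K) * Rsup pr ρ f K + expLogCol pr K :=
  calc (1 - tauK pr K) * Rsup pr ρ f K + expLogCol pr K
      ≤ (∑ c, ∑ cs : Fin K → Fin C,
          if colNum c cs = 0 then clsWeight pr c cs * supLoss ρ f c cs else 0)
        + expLogCol pr K := by
        gcongr
        exact one_sub_tauK_mul_Rsup_le hpr ρ f K
    _ ≤ Rbarsup pr ρ f K :=
        sum_noCollision_add_expLogCol_le_Rbarsup hpr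
          (log_colNum_add_one_le_supLoss ρ hfm hfb)

/-- **Lemma (CURL bound).**
For any encoder `f` (with all relevant integrals existing), the intermediate supervised
risk satisfies `R̄^sup(f) ≥ (1 − τ_K)·R^sup(f) + E_{(c,c_1,…,c_K)~π^{K+1}} log(Col + 1)`. -/
theorem curl_bound
    (K : ℕ) (hC : 1 ≤ C) (hK : 1 ≤ K)
    (pr : Fin C → ℝ) (hpr : ∀ c, 0 ≤ pr c) (hpr1 : ∑ c, pr c = 1)
    (ρ : Fin C → Measure X) [∀ c, IsProbabilityMeasure (ρ c)]
    (f : X → EuclideanSpace ℝ (Fin d)) (hfm : Measurable f)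
    (hfb : ∃ M : ℝ, ∀ x : X, ‖f x‖ ≤ M) :
    Rbarsup pr ρ f K ≥ (1 - tauK pr K) * Rsup pr ρ f K + expLogCol pr K :=
  curl_bound_general K pr hpr ρ f hfm hfb

end
end

section
/- Let f : 𝒳 → ℝ^d be an encoder with ‖f(x)‖ = 1 for all x ∈ 𝒳 satisfying the centered representation property E_{a~P_A} f(a(x̄)) = f(x̄) for all x̄ ∈ 𝒳. Fix c ∈ [C], x̄ ∈ 𝒳, a ∈ 𝒜, k ∈ {0,…,K} and i_1,…,i_k ∈ [C]\{c}. Then r_k(i_1,…,i_k) ≥ log(1 + (K−k) + Σ_{m=1}^k exp(−f(a(x̄))ᵀ(μ_c − μ_{i_m}))) − [ E_{x̄'~ρ_c} E_{a'~P_A} inf_{a''∈𝒜} ‖f(a'(x̄)) − f(a''(x̄'))‖ + E_{x̄'~ρ_c} sup_{a',a''∈𝒜} ‖f(a''(x̄')) − f(a'(x̄'))‖ ]. -/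
open MeasureTheory Real
open scoped BigOperators RealInnerProductSpace

noncomputable section

variable {X : Type*} [MeasurableSpace X] {Ω : Type*} [MeasurableSpace Ω] {d C : ℕ}

/-!
The InfoNCE loss `log (1 + ∑ⱼ exp zⱼ)` is convex in the logits
`zⱼ = ⟪u, f(aⱼ x̄ⱼ)⟫ - ⟪u, f(a' x̄)⟫` (`u = f(a x̄)`), so it dominates its tangent at
`wⱼ = -⟪u, μ_c - μ_{cⱼ}⟫`, where `cⱼ` is the class of the `j`-th negative; the value of the
tangent there is `r_k^sup`, because `wⱼ = 0` for the `K - k` negatives of class `c`. The tangent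
is affine in the representations, so integrating out the augmentations (using centredness) and
then the negatives replaces `f(aⱼ x̄ⱼ)` by the class means and `f(a' x̄)` by `f(x̄)`, leaving the
error `(∑ⱼ pⱼ) ⟪u, μ_c - f(x̄)⟫ ≥ -‖μ_c - f(x̄)‖` with softmax weights `pⱼ`, `∑ⱼ pⱼ ≤ 1`.
Finally `‖μ_c - f(x̄)‖ ≤ E_{x̄'} ‖f(x̄') - f(x̄)‖`, and each term is bounded through the triangle
inequality `f(x̄') → f(a'' x̄') → f(a' x̄)`, averaged over `a'`, with
`‖f(a'' x̄') - f(x̄')‖ ≤ sup_{a₁,a₂} ‖f(a₁ x̄') - f(a₂ x̄')‖` since `f(x̄') = E_a f(a x̄')`.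
-/

open Finset

theorem log_one_add_sum_exp_tangent {ι : Type*} [Fintype ι] (w z : ι → ℝ) :
    Real.log (1 + ∑ j, exp (w j)) + ∑ j, exp (w j) / (1 + ∑ l, exp (w l)) * (z j - w j) ≤
      Real.log (1 + ∑ j, exp (z j)) := by
  set S := 1 + ∑ l, exp (w l)
  have hS : 0 < S := by positivity
  set t := ∑ j, exp (w j) / S * (z j - w j)
  -- Jensen for `exp` with weights `1/S, exp (w j)/S` at the points `0, z j - w j`
  have hjensen : exp t ≤ 1 / S + ∑ j, exp (w j) / S * exp (z j - w j) := by
    have := convexOn_exp.map_sum_le (t := (univ : Finset (Option ι)))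
      (w := fun o => o.elim (1 / S) fun j => exp (w j) / S)
      (p := fun o => o.elim 0 fun j => z j - w j)
      (by rintro (_ | j) _ <;> simp only [Option.elim] <;> positivity)
      (by simp only [Fintype.sum_option, Option.elim]; rw [← sum_div, ← add_div, div_self hS.ne'])
      (fun _ _ => trivial)
    simpa [Fintype.sum_option, t] using this
  have hexp : S * exp t ≤ 1 + ∑ j, exp (z j) := by
    calc S * exp t ≤ S * (1 / S + ∑ j, exp (w j) / S * exp (z j - w j)) := by gcongr
      _ = 1 + ∑ j, exp (z j) := by
        rw [mul_add, mul_sum]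
        congr 1
        · field_simp
        · refine sum_congr rfl fun j _ => ?_
          rw [exp_sub]
          field_simp
  calc Real.log S + t = Real.log (S * exp t) := by rw [Real.log_mul hS.ne' (exp_pos t).ne', log_exp]
    _ ≤ _ := Real.log_le_log (by positivity) hexp

section ProbabilityIntegral

variable {α : Type*} [MeasurableSpace α] {μ : Measure α} [IsProbabilityMeasure μ]
  {E : Type*} [NormedAddCommGroup E] [NormedSpace ℝ E]

theorem norm_integral_le_of_forall_norm_le {g : α → E} {B : ℝ} (h : ∀ x, ‖g x‖ ≤ B) :
    ‖∫ x, g x ∂μ‖ ≤ B :=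
  (norm_integral_le_of_norm_le_const (ae_of_all _ h)).trans (by simp)

theorem add_sum_mul_integral_le_integral {ι : Type*} [Fintype ι] {F : α → ℝ} {g : ι → α → ℝ}
    {T : ℝ} {p G : ι → ℝ} (hF : Integrable F μ) (hg : ∀ j, Integrable (g j) μ)
    (hG : ∀ j, ∫ x, g j x ∂μ = G j) (hle : ∀ x, T + ∑ j, p j * g j x ≤ F x) :
    T + ∑ j, p j * G j ≤ ∫ x, F x ∂μ := by
  have hpg : ∀ j, Integrable (fun x => p j * g j x) μ := fun j => (hg j).const_mul _
  calc T + ∑ j, p j * G j = ∫ x, (T + ∑ j, p j * g j x) ∂μ := by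
        rw [integral_add (integrable_const T) (integrable_finsetSum _ fun j _ => hpg j),
          integral_finsetSum _ fun j _ => hpg j]
        simp [integral_const_mul, hG]
    _ ≤ ∫ x, F x ∂μ :=
        integral_mono ((integrable_const T).add (integrable_finsetSum _ fun j _ => hpg j)) hF hle

variable [CompleteSpace E]

theorem integral_sub_const {g : α → E} (hg : Integrable g μ) (v : E) :
    ∫ x, (g x - v) ∂μ = ∫ x, g x ∂μ - v := by
  simp [integral_sub hg (integrable_const v)]

theorem integral_const_sub (v : E) {g : α → E} (hg : Integrable g μ) :
    ∫ x, (v - g x) ∂μ = v - ∫ x, g x ∂μ := by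
  simp [integral_sub (integrable_const v) hg]

theorem norm_sub_integral_le_integral_norm_sub (v : E) {g : α → E} (hg : Integrable g μ) :
    ‖v - ∫ x, g x ∂μ‖ ≤ ∫ x, ‖v - g x‖ ∂μ := by
  rw [← integral_const_sub v hg]
  exact norm_integral_le_integral_norm _

theorem norm_sub_integral_le_of_forall_norm_sub_le (v : E) {g : α → E} (hg : Integrable g μ)
    {B : ℝ} (h : ∀ x, ‖v - g x‖ ≤ B) : ‖v - ∫ x, g x ∂μ‖ ≤ B := by
  rw [← integral_const_sub v hg]
  exact norm_integral_le_of_forall_norm_le h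

end ProbabilityIntegral

theorem sum_dite_lt_eq {M : Type*} [AddCommMonoid M] {k K : ℕ} (hk : k ≤ K) (g : Fin k → M)
    (b : M) :
    ∑ j : Fin K, (if h : (j : ℕ) < k then g ⟨j, h⟩ else b) = (K - k) • b + ∑ m, g m := by
  set g' : ℕ → M := fun n => if h : n < k then g ⟨n, h⟩ else b
  have hIco : ∑ n ∈ Ico k K, g' n = (K - k) • b := by
    rw [sum_congr rfl fun n hn => dif_neg (not_lt.mpr (mem_Ico.mp hn).1), sum_const,
      Nat.card_Ico]
  rw [Fin.sum_univ_eq_sum_range g' K, ← sum_range_add_sum_Ico g' hk, hIco, add_comm,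
    ← Fin.sum_univ_eq_sum_range g' k]
  simp [g']

theorem neg_norm_le_mul_inner {F : Type*} [NormedAddCommGroup F] [InnerProductSpace ℝ F]
    {u : F} (hu : ‖u‖ ≤ 1) (z : F) {t : ℝ} (ht0 : 0 ≤ t) (ht1 : t ≤ 1) :
    -‖z‖ ≤ t * ⟪u, z⟫ := by
  have h := abs_le.mp ((abs_real_inner_le_norm u z).trans
    (mul_le_of_le_one_left (norm_nonneg z) hu))
  rcases le_total 0 ⟪u, z⟫ with hz | hz <;> nlinarith [norm_nonneg z]

section Contrastive

variable {f : X → EuclideanSpace ℝ (Fin d)} {A : Ω → X → X}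

theorem infoNCE_tangent {Y : Type*} (f : Y → EuclideanSpace ℝ (Fin d)) {K : ℕ} (w : Fin K → ℝ)
    (x x' : Y) (xs : Fin K → Y) :
    Real.log (1 + ∑ j, exp (w j)) + ∑ j, exp (w j) / (1 + ∑ l, exp (w l)) *
        (⟪f x, f (xs j)⟫ - ⟪f x, f x'⟫ - w j) ≤ infoNCE f K x x' xs := by
  unfold infoNCE
  simpa only [inner_sub_right, neg_sub] using
    log_one_add_sum_exp_tangent w fun j => -⟪f x, f x' - f (xs j)⟫

theorem norm_infoNCE_le {Y : Type*} {f : Y → EuclideanSpace ℝ (Fin d)} (hf : ∀ x, ‖f x‖ ≤ 1)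
    {K : ℕ} (x x' : Y) (xs : Fin K → Y) :
    ‖infoNCE f K x x' xs‖ ≤ Real.log (1 + K * exp 2) := by
  have hlogit : ∀ j, -⟪f x, f x' - f (xs j)⟫ ≤ 2 := fun j =>
    calc -⟪f x, f x' - f (xs j)⟫ ≤ ‖f x‖ * ‖f x' - f (xs j)‖ :=
          (neg_le_abs _).trans (abs_real_inner_le_norm _ _)
      _ ≤ 1 * (1 + 1) :=
          mul_le_mul (hf x) (norm_sub_le_of_le (hf _) (hf _)) (norm_nonneg _) zero_le_one
      _ = 2 := by norm_num
  unfold infoNCE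
  rw [Real.norm_of_nonneg (Real.log_nonneg (le_add_of_nonneg_right (by positivity)))]
  gcongr
  calc ∑ j, exp (-⟪f x, f x' - f (xs j)⟫) ≤ ∑ _j : Fin K, exp 2 :=
        sum_le_sum fun j _ => exp_le_exp.mpr (hlogit j)
    _ = K * exp 2 := by simp

theorem measurable_infoNCE_sample (hfm : Measurable f)
    (hA : Measurable fun p : Ω × X => A p.1 p.2) (K : ℕ) (x y : X) :
    Measurable fun q : ((Fin K → X) × Ω) × (Fin K → Ω) =>
      infoNCE f K x (A q.1.2 y) fun j => A (q.2 j) (q.1.1 j) := by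
  unfold infoNCE
  fun_prop

variable {PA : Measure Ω} [IsProbabilityMeasure PA]

theorem integrable_comp_augment (hfm : Measurable f)
    (hA : Measurable fun p : Ω × X => A p.1 p.2) (hf : ∀ x, ‖f x‖ ≤ 1) (z : X) :
    Integrable (fun b => f (A b z)) PA :=
  .of_bound (hfm.comp (hA.comp (measurable_id.prodMk measurable_const))).aestronglyMeasurable 1
    (ae_of_all _ fun _ => hf _)

theorem integral_inner_comp_augment (hfm : Measurable f)
    (hA : Measurable fun p : Ω × X => A p.1 p.2) (hf : ∀ x, ‖f x‖ ≤ 1)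
    (hcent : ∀ z, ∫ b, f (A b z) ∂PA = f z) (v : EuclideanSpace ℝ (Fin d)) (z : X) :
    ∫ b, ⟪v, f (A b z)⟫ ∂PA = ⟪v, f z⟫ := by
  rw [integral_inner (integrable_comp_augment hfm hA hf z), hcent]

theorem tangent_le_integral_infoNCE_augment (hfm : Measurable f)
    (hA : Measurable fun p : Ω × X => A p.1 p.2) (hf : ∀ x, ‖f x‖ ≤ 1)
    (hcent : ∀ z, ∫ b, f (A b z) ∂PA = f z) {K : ℕ} (w : Fin K → ℝ) (x y : X)
    (xs : Fin K → X) (a' : Ω) :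
    Real.log (1 + ∑ j, exp (w j)) + ∑ j, exp (w j) / (1 + ∑ l, exp (w l)) *
        (⟪f x, f (xs j)⟫ - ⟪f x, f (A a' y)⟫ - w j) ≤
      ∫ as, infoNCE f K x (A a' y) (fun j => A (as j) (xs j))
        ∂(Measure.pi fun _ : Fin K => PA) := by
  have hφ : ∀ z, Integrable (fun b => ⟪f x, f (A b z)⟫) PA := fun z =>
    (integrable_comp_augment hfm hA hf z).const_inner _
  have hφ_eval : ∀ j, Integrable (fun as : Fin K → Ω => ⟪f x, f (A (as j) (xs j))⟫)
      (Measure.pi fun _ : Fin K => PA) := fun j =>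
    integrable_comp_eval (μ := fun _ : Fin K => PA) (i := j) (hφ (xs j))
  refine add_sum_mul_integral_le_integral
    (g := fun j as => ⟪f x, f (A (as j) (xs j))⟫ - ⟪f x, f (A a' y)⟫ - w j) ?_ (fun j => ?_)
    (fun j => ?_) (fun as => ?_)
  · exact .of_bound (Measurable.aestronglyMeasurable (by unfold infoNCE; fun_prop)) _
      (ae_of_all _ fun _ => norm_infoNCE_le hf ..)
  · exact ((hφ_eval j).sub' (integrable_const _)).sub' (integrable_const _)
  · rw [integral_sub_const ((hφ_eval j).sub' (integrable_const _)), integral_sub_const (hφ_eval j),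
      integral_comp_eval (μ := fun _ : Fin K => PA) (i := j) (hφ (xs j)).1,
      integral_inner_comp_augment hfm hA hf hcent]
  · exact infoNCE_tangent f w x (A a' y) fun j => A (as j) (xs j)

theorem stronglyMeasurable_integral_infoNCE_augment (hfm : Measurable f)
    (hA : Measurable fun p : Ω × X => A p.1 p.2) (K : ℕ) (x y : X) :
    StronglyMeasurable fun p : (Fin K → X) × Ω =>
      ∫ as, infoNCE f K x (A p.2 y) (fun j => A (as j) (p.1 j)) ∂(Measure.pi fun _ : Fin K => PA) :=
  (measurable_infoNCE_sample hfm hA K x y).stronglyMeasurable.integral_prod_right'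

theorem tangent_le_integral_integral_infoNCE_augment (hfm : Measurable f)
    (hA : Measurable fun p : Ω × X => A p.1 p.2) (hf : ∀ x, ‖f x‖ ≤ 1)
    (hcent : ∀ z, ∫ b, f (A b z) ∂PA = f z) {K : ℕ} (w : Fin K → ℝ) (x y : X)
    (xs : Fin K → X) :
    Real.log (1 + ∑ j, exp (w j)) + ∑ j, exp (w j) / (1 + ∑ l, exp (w l)) *
        (⟪f x, f (xs j)⟫ - ⟪f x, f y⟫ - w j) ≤
      ∫ a', ∫ as, infoNCE f K x (A a' y) (fun j => A (as j) (xs j))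
        ∂(Measure.pi fun _ : Fin K => PA) ∂PA := by
  have hφ : Integrable (fun a' => ⟪f x, f (A a' y)⟫) PA :=
    (integrable_comp_augment hfm hA hf y).const_inner _
  refine add_sum_mul_integral_le_integral
    (g := fun j a' => ⟪f x, f (xs j)⟫ - ⟪f x, f (A a' y)⟫ - w j) ?_ (fun j => ?_)
    (fun j => ?_) (fun a' => ?_)
  · exact .of_bound ((stronglyMeasurable_integral_infoNCE_augment hfm hA K x y).comp_measurable
      measurable_prodMk_left).aestronglyMeasurable _
      (ae_of_all _ fun _ => norm_integral_le_of_forall_norm_le fun _ => norm_infoNCE_le hf ..)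
  · exact ((integrable_const _).sub' hφ).sub' (integrable_const _)
  · rw [integral_sub_const ((integrable_const _).sub' hφ), integral_const_sub _ hφ,
      integral_inner_comp_augment hfm hA hf hcent]
  · exact tangent_le_integral_infoNCE_augment hfm hA hf hcent w x y xs a'

theorem tangent_le_integral_infoNCE (hfm : Measurable f)
    (hA : Measurable fun p : Ω × X => A p.1 p.2) (hf : ∀ x, ‖f x‖ ≤ 1)
    (hcent : ∀ z, ∫ b, f (A b z) ∂PA = f z) {K : ℕ} (ρ' : Fin K → Measure X)
    [∀ j, IsProbabilityMeasure (ρ' j)] (w : Fin K → ℝ) (x y : X) :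
    Real.log (1 + ∑ j, exp (w j)) + ∑ j, exp (w j) / (1 + ∑ l, exp (w l)) *
        (⟪f x, ∫ z, f z ∂ρ' j⟫ - ⟪f x, f y⟫ - w j) ≤
      ∫ xs, ∫ a', ∫ as, infoNCE f K x (A a' y) (fun j => A (as j) (xs j))
        ∂(Measure.pi fun _ : Fin K => PA) ∂PA ∂(Measure.pi ρ') := by
  have hf_int : ∀ j, Integrable f (ρ' j) := fun j =>
    .of_bound hfm.aestronglyMeasurable 1 (ae_of_all _ hf)
  have hφ : ∀ j, Integrable (fun xs : Fin K → X => ⟪f x, f (xs j)⟫) (Measure.pi ρ') := fun j =>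
    integrable_comp_eval (μ := ρ') (i := j) (f := fun z => ⟪f x, f z⟫) ((hf_int j).const_inner _)
  refine add_sum_mul_integral_le_integral (g := fun j xs => ⟪f x, f (xs j)⟫ - ⟪f x, f y⟫ - w j)
    ?_ (fun j => ?_) (fun j => ?_) (fun xs => ?_)
  · exact .of_bound (stronglyMeasurable_integral_infoNCE_augment hfm hA K x y
      (PA := PA)).integral_prod_right'.aestronglyMeasurable _ (ae_of_all _ fun _ =>
        norm_integral_le_of_forall_norm_le fun _ =>
          norm_integral_le_of_forall_norm_le fun _ => norm_infoNCE_le hf ..)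
  · exact ((hφ j).sub' (integrable_const _)).sub' (integrable_const _)
  · rw [integral_sub_const ((hφ j).sub' (integrable_const _)), integral_sub_const (hφ j),
      integral_comp_eval (μ := ρ') (i := j) (f := fun z => ⟪f x, f z⟫)
        ((hf_int j).const_inner _).1, integral_inner (hf_int j)]
  · exact tangent_le_integral_integral_infoNCE_augment hfm hA hf hcent w x y xs

theorem norm_augment_sub_le_iSup (hfm : Measurable f)
    (hA : Measurable fun p : Ω × X => A p.1 p.2) (hf : ∀ x, ‖f x‖ ≤ 1)
    (hcent : ∀ z, ∫ b, f (A b z) ∂PA = f z) (z : X) (a'' : Ω) :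
    ‖f (A a'' z) - f z‖ ≤ ⨆ q : Ω × Ω, ‖f (A q.1 z) - f (A q.2 z)‖ := by
  have hbdd : BddAbove (Set.range fun q : Ω × Ω => ‖f (A q.1 z) - f (A q.2 z)‖) :=
    ⟨1 + 1, by rintro _ ⟨q, rfl⟩; exact norm_sub_le_of_le (hf _) (hf _)⟩
  rw [← hcent z]
  exact norm_sub_integral_le_of_forall_norm_sub_le _ (integrable_comp_augment hfm hA hf z)
    fun b => le_ciSup hbdd (a'', b)

theorem norm_sub_augment_le_iInf_add_iSup (hfm : Measurable f)
    (hA : Measurable fun p : Ω × X => A p.1 p.2) (hf : ∀ x, ‖f x‖ ≤ 1)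
    (hcent : ∀ z, ∫ b, f (A b z) ∂PA = f z) (x z : X) (a' : Ω) :
    ‖f z - f (A a' x)‖ ≤
      (⨅ a'' : Ω, ‖f (A a' x) - f (A a'' z)‖) + ⨆ q : Ω × Ω, ‖f (A q.1 z) - f (A q.2 z)‖ := by
  have : Nonempty Ω := ⟨a'⟩
  rw [← sub_le_iff_le_add]
  refine le_ciInf fun a'' => ?_
  have hsup := norm_augment_sub_le_iSup hfm hA hf hcent z a''
  have htri := norm_sub_le_norm_sub_add_norm_sub (f z) (f (A a'' z)) (f (A a' x))
  rw [norm_sub_rev (f z) (f (A a'' z)), norm_sub_rev (f (A a'' z)) (f (A a' x))] at htri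
  linarith

theorem norm_sub_le_integral_iInf_add_iSup (hfm : Measurable f)
    (hA : Measurable fun p : Ω × X => A p.1 p.2) (hf : ∀ x, ‖f x‖ ≤ 1)
    (hcent : ∀ z, ∫ b, f (A b z) ∂PA = f z) (x z : X)
    (hinf : Integrable (fun a' => ⨅ a'' : Ω, ‖f (A a' x) - f (A a'' z)‖) PA) :
    ‖f z - f x‖ ≤ (∫ a', (⨅ a'' : Ω, ‖f (A a' x) - f (A a'' z)‖) ∂PA) +
      ⨆ q : Ω × Ω, ‖f (A q.1 z) - f (A q.2 z)‖ := by
  have hfA := integrable_comp_augment hfm hA hf x (PA := PA)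
  calc ‖f z - f x‖ = ‖f z - ∫ a', f (A a' x) ∂PA‖ := by rw [hcent]
    _ ≤ ∫ a', ‖f z - f (A a' x)‖ ∂PA := norm_sub_integral_le_integral_norm_sub _ hfA
    _ ≤ ∫ a', ((⨅ a'' : Ω, ‖f (A a' x) - f (A a'' z)‖) +
          ⨆ q : Ω × Ω, ‖f (A q.1 z) - f (A q.2 z)‖) ∂PA :=
        integral_mono ((integrable_const _).sub' hfA).norm (hinf.add (integrable_const _))
          (norm_sub_augment_le_iInf_add_iSup hfm hA hf hcent x z)
    _ = _ := by rw [integral_add hinf (integrable_const _), integral_const]; simp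

theorem norm_integral_sub_le_integral_iInf_add_integral_iSup (hfm : Measurable f)
    (hA : Measurable fun p : Ω × X => A p.1 p.2) (hf : ∀ x, ‖f x‖ ≤ 1)
    (hcent : ∀ z, ∫ b, f (A b z) ∂PA = f z) (ρ₀ : Measure X) [IsProbabilityMeasure ρ₀] (x : X)
    (hinf : ∀ z, Integrable (fun a' => ⨅ a'' : Ω, ‖f (A a' x) - f (A a'' z)‖) PA)
    (hinf_int : Integrable (fun z => ∫ a', (⨅ a'' : Ω, ‖f (A a' x) - f (A a'' z)‖) ∂PA) ρ₀)
    (hsup_int : Integrable (fun z => ⨆ q : Ω × Ω, ‖f (A q.1 z) - f (A q.2 z)‖) ρ₀) :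
    ‖∫ z, f z ∂ρ₀ - f x‖ ≤
      (∫ z, ∫ a', (⨅ a'' : Ω, ‖f (A a' x) - f (A a'' z)‖) ∂PA ∂ρ₀) +
        ∫ z, (⨆ q : Ω × Ω, ‖f (A q.1 z) - f (A q.2 z)‖) ∂ρ₀ := by
  have hf_int : Integrable f ρ₀ := .of_bound hfm.aestronglyMeasurable 1 (ae_of_all _ hf)
  calc ‖∫ z, f z ∂ρ₀ - f x‖ = ‖f x - ∫ z, f z ∂ρ₀‖ := norm_sub_rev _ _
    _ ≤ ∫ z, ‖f x - f z‖ ∂ρ₀ := norm_sub_integral_le_integral_norm_sub _ hf_int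
    _ ≤ ∫ z, ((∫ a', (⨅ a'' : Ω, ‖f (A a' x) - f (A a'' z)‖) ∂PA) +
          ⨆ q : Ω × Ω, ‖f (A q.1 z) - f (A q.2 z)‖) ∂ρ₀ :=
        integral_mono ((integrable_const _).sub' hf_int).norm (hinf_int.add hsup_int) fun z => by
          rw [norm_sub_rev]
          exact norm_sub_le_integral_iInf_add_iSup hfm hA hf hcent x z (hinf z)
    _ = _ := integral_add hinf_int hsup_int

end Contrastive

theorem rkSup_eq_log_one_add_sum_exp (ρ : Fin C → Measure X) (f : X → EuclideanSpace ℝ (Fin d))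
    {k K : ℕ} (hk : k ≤ K) (c : Fin C) (u : EuclideanSpace ℝ (Fin d)) (i : Fin k → Fin C) :
    rkSup ρ f K c u k i = Real.log (1 + ∑ j : Fin K, exp (-⟪u, meanRep ρ f c -
      meanRep ρ f (if h : (j : ℕ) < k then i ⟨j, h⟩ else c)⟫)) := by
  have hexp : ∀ j : Fin K, exp (-⟪u, meanRep ρ f c -
      meanRep ρ f (if h : (j : ℕ) < k then i ⟨j, h⟩ else c)⟫) =
        if h : (j : ℕ) < k then exp (-⟪u, meanRep ρ f c - meanRep ρ f (i ⟨j, h⟩)⟫) else 1 :=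
    fun j => by split_ifs <;> simp
  rw [rkSup, sum_congr rfl fun j _ => hexp j,
    sum_dite_lt_eq hk (fun m => exp (-⟪u, meanRep ρ f c - meanRep ρ f (i m)⟫)), nsmul_eq_mul,
    mul_one, add_assoc]

theorem inner_risk_bound_improved_general
    (K : ℕ)
    (ρ : Fin C → Measure X) [∀ c, IsProbabilityMeasure (ρ c)]
    (PA : Measure Ω) [IsProbabilityMeasure PA]
    (A : Ω → X → X) (hA : Measurable fun p : Ω × X => A p.1 p.2)
    (f : X → EuclideanSpace ℝ (Fin d)) (hfm : Measurable f)
    (hf : ∀ x, ‖f x‖ = 1)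
    (hcent : ∀ xb : X, (∫ a, f (A a xb) ∂PA) = f xb)
    (c : Fin C) (xb : X) (a : Ω)
    (k : ℕ) (hk : k ≤ K) (i : Fin k → Fin C)
    (hsupc : Integrable
      (fun xb' => ⨆ p : Ω × Ω, ‖f (A p.1 xb') - f (A p.2 xb')‖) (ρ c))
    (hinf1 : ∀ xb' : X,
      Integrable (fun a' => ⨅ a'' : Ω, ‖f (A a' xb) - f (A a'' xb')‖) PA)
    (hinf2 : Integrable
      (fun xb' => ∫ a', (⨅ a'' : Ω, ‖f (A a' xb) - f (A a'' xb')‖) ∂PA) (ρ c)) :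
    innerRisk ρ PA A f K c xb a k i ≥
      rkSup ρ f K c (f (A a xb)) k i -
        ((∫ xb', ∫ a', (⨅ a'' : Ω, ‖f (A a' xb) - f (A a'' xb')‖) ∂PA ∂(ρ c)) +
          ∫ xb', (⨆ p : Ω × Ω, ‖f (A p.1 xb') - f (A p.2 xb')‖) ∂(ρ c)) := by
  have hf₁ : ∀ x, ‖f x‖ ≤ 1 := fun x => (hf x).le
  rw [innerRisk]
  set cls : Fin K → Fin C := fun j => if h : (j : ℕ) < k then i ⟨j, h⟩ else c
  set w : Fin K → ℝ := fun j => -⟪f (A a xb), meanRep ρ f c - meanRep ρ f (cls j)⟫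
  have htangent := tangent_le_integral_infoNCE hfm hA hf₁ hcent (fun j => ρ (cls j)) w (A a xb) xb
  set S := 1 + ∑ j, exp (w j)
  have hlogS : Real.log S = rkSup ρ f K c (f (A a xb)) k i :=
    (rkSup_eq_log_one_add_sum_exp ρ f hk c _ i).symm
  have hmass : 0 ≤ ∑ j, exp (w j) / S ∧ ∑ j, exp (w j) / S ≤ 1 :=
    ⟨by positivity, by rw [← sum_div, div_le_one (by positivity)]; linarith⟩
  have hcollapse : ∑ j, exp (w j) / S *
        (⟪f (A a xb), meanRep ρ f (cls j)⟫ - ⟪f (A a xb), f xb⟫ - w j) =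
      (∑ j, exp (w j) / S) * ⟪f (A a xb), meanRep ρ f c - f xb⟫ := by
    rw [sum_mul]
    refine sum_congr rfl fun j _ => ?_
    simp only [w, inner_sub_right]
    ring
  have hinner := neg_norm_le_mul_inner (hf₁ (A a xb)) (meanRep ρ f c - f xb) hmass.1 hmass.2
  have hdist := norm_integral_sub_le_integral_iInf_add_integral_iSup hfm hA hf₁ hcent (ρ c) xb
    hinf1 hinf2 hsupc
  unfold meanRep at *
  linarith

/-- **Theorem 8 (Improved bound of the inner risk).**
For `‖f(·)‖ = 1` with centered representations `E_{a~P_A} f(a(x̄)) = f(x̄)`, for every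
fixed anchor class `c`, image `x̄`, augmentation `a`, `k ≤ K` and classes
`i_1,…,i_k ≠ c`,
`r_k(i_1,…,i_k) ≥ log(1 + (K−k) + Σ_m exp(−f(a(x̄))ᵀ(μ_c − μ_{i_m})))
  − [E_{x̄'~ρ_c} E_{a'} inf_{a''}‖f(a'(x̄)) − f(a''(x̄'))‖
     + E_{x̄'~ρ_c} sup_{a',a''}‖f(a''(x̄')) − f(a'(x̄'))‖]`. -/
theorem inner_risk_bound_improved
    (K : ℕ) (hC : 1 ≤ C) (hK : 1 ≤ K)
    (pr : Fin C → ℝ) (hpr : ∀ c, 0 ≤ pr c) (hpr1 : ∑ c, pr c = 1)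
    (ρ : Fin C → Measure X) [∀ c, IsProbabilityMeasure (ρ c)]
    (PA : Measure Ω) [IsProbabilityMeasure PA]
    (A : Ω → X → X) (hA : Measurable fun p : Ω × X => A p.1 p.2)
    (f : X → EuclideanSpace ℝ (Fin d)) (hfm : Measurable f)
    (hf : ∀ x, ‖f x‖ = 1)
    (hcent : ∀ xb : X, (∫ a, f (A a xb) ∂PA) = f xb)
    (c : Fin C) (xb : X) (a : Ω)
    (k : ℕ) (hk : k ≤ K) (i : Fin k → Fin C) (hi : ∀ m, i m ≠ c)
    (hsupc : Integrable
      (fun xb' => ⨆ p : Ω × Ω, ‖f (A p.1 xb') - f (A p.2 xb')‖) (ρ c))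
    (hinf1 : ∀ xb' : X,
      Integrable (fun a' => ⨅ a'' : Ω, ‖f (A a' xb) - f (A a'' xb')‖) PA)
    (hinf2 : Integrable
      (fun xb' => ∫ a', (⨅ a'' : Ω, ‖f (A a' xb) - f (A a'' xb')‖) ∂PA) (ρ c)) :
    innerRisk ρ PA A f K c xb a k i ≥
      rkSup ρ f K c (f (A a xb)) k i -
        ((∫ xb', ∫ a', (⨅ a'' : Ω, ‖f (A a' xb) - f (A a'' xb')‖) ∂PA ∂(ρ c)) +
          ∫ xb', (⨆ p : Ω × Ω, ‖f (A p.1 xb') - f (A p.2 xb')‖) ∂(ρ c)) :=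
  inner_risk_bound_improved_general K ρ PA A hA f hfm hf hcent c xb a k hk i hsupc hinf1 hinf2

end
end
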